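/- Let f(s) = Σ_{n=1}^∞ a_n e^{−λ_n s} be a general Dirichlet series (a_n ∈ ℂ, λ_n ∈ ℝ) which converges absolutely at a point s₀ ∈ ℂ. Then for every ε > 0, liminf_{T→∞} (1/T)·μ{ τ ∈ [0,T] : | Σ_{n=1}^∞ a_n e^{−λ_n (s₀+iτ)} − Σ_{n=1}^∞ a_n e^{−λ_n s₀} | < ε } > 0, where μ denotes Lebesgue measure. -/

import Mathlib

/-!
With `c n = a n * e^{-λ_n s₀}` we have `f(s₀ + iτ) - f(s₀) = ∑ c n * (e^{-iλ_n τ} - 1)` and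
`∑ ‖c n‖ < ∞`. After cutting off a tail of small mass it therefore suffices that
`‖e^{-iλ_n τ} - 1‖ < δ` for the finitely many `n < N`, and the theorem reduces to the positive
lower density of the set of such common almost periods of finitely many frequencies `ω_i`.

For that, integrate the kernel `K(τ) = ∏_i cos(ω_i τ / 2)^{2m}`. It takes values in `[0, 1]`, is
at most `(1 - δ²/4)^m` off the set, and it is a trigonometric polynomial with nonnegative
coefficients whose zero-frequency part is at least `(binom(2m, m) / 4^m)^N ≥ (2m)^{-N}`; so its
mean over `[0, T]` tends to a limit at least that large. As `(1 - δ²/4)^m` decays exponentially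
in `m`, for large `m` this limit exceeds the bound off the set, and the excess bounds the density
from below.
-/

open MeasureTheory Filter Complex

noncomputable def lowerDensity (P : ℝ → Prop) : ℝ :=
  Filter.liminf (fun T : ℝ =>
    (MeasureTheory.volume {τ ∈ Set.Icc (0:ℝ) T | P τ}).toReal / T) Filter.atTop

open Topology Finset

lemma volume_sep_Icc_ne_top (P : ℝ → Prop) (T : ℝ) : volume {τ ∈ Set.Icc 0 T | P τ} ≠ ⊤ :=
  ((measure_mono (Set.sep_subset _ _)).trans_lt measure_Icc_lt_top).ne

lemma measureReal_sep_Icc_div_le_one (P : ℝ → Prop) {T : ℝ} (hT : 0 < T) :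
    volume.real {τ ∈ Set.Icc 0 T | P τ} / T ≤ 1 := by
  rw [div_le_one hT]
  calc volume.real {τ ∈ Set.Icc 0 T | P τ} ≤ volume.real (Set.Icc 0 T) :=
        measureReal_mono (Set.sep_subset _ _) measure_Icc_lt_top.ne
    _ = T := by simp [hT.le]

lemma isCoboundedUnder_ge_lowerDensity (P : ℝ → Prop) :
    IsCoboundedUnder (· ≥ ·) atTop
      fun T : ℝ => (volume {τ ∈ Set.Icc (0 : ℝ) T | P τ}).toReal / T :=
  isCoboundedUnder_ge_of_eventually_le atTop <| (eventually_gt_atTop 0).mono fun _ hT =>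
    measureReal_sep_Icc_div_le_one P hT

lemma le_lowerDensity {P : ℝ → Prop} {β : ℝ}
    (h : ∀ᶠ T in atTop, β ≤ volume.real {τ ∈ Set.Icc 0 T | P τ} / T) : β ≤ lowerDensity P :=
  le_liminf_of_le (isCoboundedUnder_ge_lowerDensity P) h

lemma lowerDensity_mono {P Q : ℝ → Prop} (h : ∀ τ, P τ → Q τ) :
    lowerDensity P ≤ lowerDensity Q := by
  refine liminf_le_liminf ((eventually_gt_atTop 0).mono fun T hT => ?_)
    (isBoundedUnder_of_eventually_ge (a := 0) ((eventually_ge_atTop 0).mono fun T hT => ?_))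
    (isCoboundedUnder_ge_lowerDensity Q)
  · exact div_le_div_of_nonneg_right
      (measureReal_mono (fun τ hτ => ⟨hτ.1, h τ hτ.2⟩) (volume_sep_Icc_ne_top Q T)) hT.le
  · exact div_nonneg ENNReal.toReal_nonneg hT

lemma intervalIntegral_le_measureReal_add_mul {φ : ℝ → ℝ} {S : Set ℝ} {q T : ℝ}
    (hS : MeasurableSet S) (hφ : IntegrableOn φ (Set.Ioc 0 T)) (hT : 0 ≤ T) (hq : 0 ≤ q)
    (hS₁ : ∀ τ ∈ S, φ τ ≤ 1) (hSq : ∀ τ ∉ S, φ τ ≤ q) :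
    ∫ τ in (0 : ℝ)..T, φ τ ≤ volume.real {τ ∈ Set.Icc 0 T | τ ∈ S} + q * T := by
  have hpt (τ : ℝ) : φ τ ≤ S.indicator 1 τ + q := by
    by_cases hτ : τ ∈ S
    · simpa [hτ] using (hS₁ τ hτ).trans (le_add_of_nonneg_right hq)
    · simpa [hτ] using hSq τ hτ
  have hfin : volume (Set.Ioc 0 T) ≠ ⊤ := measure_Ioc_lt_top.ne
  have hind : IntegrableOn (S.indicator 1) (Set.Ioc 0 T) :=
    (integrableOn_const (C := (1 : ℝ)) hfin).indicator hS
  rw [intervalIntegral.integral_of_le hT]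
  calc ∫ τ in Set.Ioc 0 T, φ τ ≤ ∫ τ in Set.Ioc 0 T, (S.indicator 1 τ + q) :=
        setIntegral_mono hφ (hind.add (integrableOn_const hfin)) hpt
    _ = volume.real (S ∩ Set.Ioc 0 T) + q * T := by
        rw [integral_add hind (integrableOn_const hfin), integral_indicator_one hS, setIntegral_const,
          measureReal_restrict_apply hS]
        simp [mul_comm, hT]
    _ ≤ _ := by
        gcongr
        · exact volume_sep_Icc_ne_top _ T
        · exact fun τ hτ => ⟨Set.Ioc_subset_Icc_self hτ.2, hτ.1⟩

lemma norm_exp_ofReal_mul_I_sub_one_le_two (x : ℝ) : ‖exp (x * I) - 1‖ ≤ 2 :=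
  (norm_sub_le _ _).trans (by rw [norm_exp_ofReal_mul_I, norm_one]; norm_num)

lemma tendsto_integral_exp_ofReal_mul_I_div (ω : ℝ) :
    Tendsto (fun T : ℝ => (∫ τ in (0 : ℝ)..T, exp (↑(ω * τ) * I)) / T) atTop
      (𝓝 (if ω = 0 then 1 else 0)) := by
  split_ifs with hω
  · refine tendsto_const_nhds.congr' ?_
    filter_upwards [eventually_ne_atTop 0] with T hT
    simp [hω, hT]
  · have hωI : (ω : ℂ) * I ≠ 0 := by simp [hω]
    have hbound (T : ℝ) : ‖∫ τ in (0 : ℝ)..T, exp (↑(ω * τ) * I)‖ ≤ 2 / |ω| := by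
      have hint : ∫ τ in (0 : ℝ)..T, exp (↑(ω * τ) * I)
          = (exp (↑(ω * T) * I) - 1) / (ω * I) := by
        simp_rw [ofReal_mul, mul_right_comm _ _ I]
        simp [integral_exp_mul_complex hωI]
      rw [hint, norm_div]
      gcongr
      · exact norm_exp_ofReal_mul_I_sub_one_le_two _
      · simp
    refine squeeze_zero_norm' ?_ (tendsto_const_nhds (x := 2 / |ω|) |>.div_atTop tendsto_id)
    filter_upwards [eventually_gt_atTop 0] with T hT
    rw [norm_div, norm_real, Real.norm_of_nonneg hT.le]
    exact div_le_div_of_nonneg_right (hbound T) hT.le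

lemma tendsto_integral_sum_exp_ofReal_mul_I_div {α : Type*} (s : Finset α) (c : α → ℂ)
    (ω : α → ℝ) :
    Tendsto (fun T : ℝ => (∫ τ in (0 : ℝ)..T, ∑ i ∈ s, c i * exp (↑(ω i * τ) * I)) / T)
      atTop (𝓝 (∑ i ∈ s with ω i = 0, c i)) := by
  have hcont (i : α) : Continuous fun τ : ℝ => c i * exp (↑(ω i * τ) * I) := by fun_prop
  have hlim := tendsto_finsetSum s fun i _ =>
    (tendsto_integral_exp_ofReal_mul_I_div (ω i)).const_mul (c i)
  simp only [mul_ite, mul_one, mul_zero, ← Finset.sum_filter] at hlim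
  refine hlim.congr fun T => ?_
  rw [intervalIntegral.integral_finsetSum fun i _ => (hcont i).intervalIntegrable _ _,
    Finset.sum_div]
  simp_rw [intervalIntegral.integral_const_mul, mul_div_assoc]

lemma ofReal_cos_half_pow_eq_sum (θ : ℝ) (m : ℕ) :
    ((Real.cos (θ / 2) ^ (2 * m) : ℝ) : ℂ)
      = ∑ k ∈ range (2 * m + 1),
          (((2 * m).choose k / 4 ^ m : ℝ) : ℂ) * exp (↑((k - m) * θ) * I) := by
  have hexp (k : ℕ) (hk : k ≤ 2 * m) :
      exp (↑(θ / 2) * I) ^ k * exp (-↑(θ / 2) * I) ^ (2 * m - k) = exp (↑((k - m) * θ) * I) := by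
    rw [← exp_nat_mul, ← exp_nat_mul, ← exp_add, Nat.cast_sub hk]
    push_cast
    ring_nf
  rw [ofReal_pow, ofReal_cos, cos, div_pow, add_pow, sum_div]
  refine sum_congr rfl fun k hk => ?_
  rw [hexp k (by simpa [Nat.lt_succ_iff] using hk), pow_mul]
  push_cast
  ring

lemma cos_pow_two_mul_le_one (x : ℝ) (m : ℕ) : Real.cos x ^ (2 * m) ≤ 1 := by
  rw [pow_mul]
  exact pow_le_one₀ (sq_nonneg _) (Real.cos_sq_le_one x)

section CosPowKernel

variable {ι : Type*} [Fintype ι]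

noncomputable def cosPowKernel (ω : ι → ℝ) (m : ℕ) (τ : ℝ) : ℝ :=
  ∏ i, Real.cos (ω i * τ / 2) ^ (2 * m)

lemma cosPowKernel_le_one (ω : ι → ℝ) (m : ℕ) (τ : ℝ) : cosPowKernel ω m τ ≤ 1 :=
  prod_le_one (fun _ _ => (even_two_mul m).pow_nonneg _) fun _ _ => cos_pow_two_mul_le_one _ m

lemma continuous_cosPowKernel (ω : ι → ℝ) (m : ℕ) : Continuous (cosPowKernel ω m) := by
  unfold cosPowKernel; fun_prop

lemma cos_half_sq_eq_one_sub (θ : ℝ) :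
    Real.cos (θ / 2) ^ 2 = 1 - ‖exp (θ * I) - 1‖ ^ 2 / 4 := by
  rw [mul_comm, norm_exp_I_mul_ofReal_sub_one, norm_mul, Real.norm_eq_abs, mul_pow, sq_abs,
    Real.cos_sq']
  norm_num

lemma cosPowKernel_le_of_le_norm {ω : ι → ℝ} {τ δ : ℝ} (m : ℕ) {i : ι}
    (hi : δ ≤ ‖exp (↑(ω i * τ) * I) - 1‖) (hδ : 0 ≤ δ) :
    cosPowKernel ω m τ ≤ max (1 - δ ^ 2 / 4) 0 ^ m := by
  classical
  have hfac : Real.cos (ω i * τ / 2) ^ 2 ≤ max (1 - δ ^ 2 / 4) 0 := by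
    rw [cos_half_sq_eq_one_sub]
    have := pow_le_pow_left₀ hδ hi 2
    exact le_max_of_le_left (by linarith)
  rw [cosPowKernel, ← mul_prod_erase _ _ (mem_univ i)]
  calc Real.cos (ω i * τ / 2) ^ (2 * m) * ∏ j ∈ univ.erase i, Real.cos (ω j * τ / 2) ^ (2 * m)
      ≤ max (1 - δ ^ 2 / 4) 0 ^ m * 1 := by
        rw [pow_mul]
        gcongr
        · exact prod_nonneg fun _ _ => (even_two_mul m).pow_nonneg _
        · exact prod_le_one (fun _ _ => (even_two_mul m).pow_nonneg _)
            fun _ _ => cos_pow_two_mul_le_one _ m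
    _ = _ := mul_one _

lemma ofReal_cosPowKernel_eq_sum [DecidableEq ι] (ω : ι → ℝ) (m : ℕ) (τ : ℝ) :
    (cosPowKernel ω m τ : ℂ) = ∑ k ∈ Fintype.piFinset fun _ : ι => range (2 * m + 1),
      ((∏ i, ((2 * m).choose (k i) / 4 ^ m : ℝ) : ℝ) : ℂ)
        * exp (↑((∑ i, ((k i : ℝ) - m) * ω i) * τ) * I) := by
  simp_rw [cosPowKernel, ofReal_prod, ofReal_cos_half_pow_eq_sum, prod_univ_sum]
  refine sum_congr rfl fun k _ => ?_
  rw [sum_mul, ofReal_sum, sum_mul, exp_sum, ← prod_mul_distrib]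
  refine prod_congr rfl fun i _ => ?_
  push_cast
  ring_nf

lemma exists_tendsto_integral_cosPowKernel_div (ω : ι → ℝ) (m : ℕ) :
    ∃ L, ((2 * m).choose m / 4 ^ m : ℝ) ^ Fintype.card ι ≤ L ∧
      Tendsto (fun T : ℝ => (∫ τ in (0 : ℝ)..T, cosPowKernel ω m τ) / T) atTop (𝓝 L) := by
  classical
  set w : (ι → ℕ) → ℝ := fun k => ∏ i, ((2 * m).choose (k i) / 4 ^ m : ℝ)
  set ν : (ι → ℕ) → ℝ := fun k => ∑ i, ((k i : ℝ) - m) * ω i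
  set K := Fintype.piFinset fun _ : ι => range (2 * m + 1)
  refine ⟨∑ k ∈ K with ν k = 0, w k, ?_, ?_⟩
  · have hw : ∀ k, 0 ≤ w k := fun k => prod_nonneg fun i _ => by positivity
    calc ((2 * m).choose m / 4 ^ m : ℝ) ^ Fintype.card ι = w fun _ => m := by simp [w, div_pow]
      _ ≤ _ := single_le_sum (fun k _ => hw k) (by simp [K, ν]; omega)
  · have hlim := tendsto_integral_sum_exp_ofReal_mul_I_div K (fun k => (w k : ℂ)) ν
    rw [← tendsto_ofReal_iff]
    push_cast
    refine hlim.congr fun T => ?_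
    simp_rw [← intervalIntegral.integral_ofReal, ofReal_cosPowKernel_eq_sum]
    rfl

end CosPowKernel

lemma exists_pow_lt_choose_div_four_pow_pow (N : ℕ) {q : ℝ} (hq₀ : 0 ≤ q) (hq₁ : q < 1) :
    ∃ m : ℕ, q ^ m < ((2 * m).choose m / 4 ^ m : ℝ) ^ N := by
  have hlim : Tendsto (fun m : ℕ => (2 : ℝ) ^ N * ((m : ℝ) ^ N * q ^ m)) atTop (𝓝 0) := by
    simpa using (tendsto_pow_const_mul_const_pow_of_lt_one N hq₀ hq₁).const_mul ((2 : ℝ) ^ N)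
  obtain ⟨m, hm_lt, hm_pos⟩ :=
    ((hlim.eventually (eventually_lt_nhds one_pos)).and (eventually_gt_atTop 0)).exists
  have hm : (0 : ℝ) < 2 * m := by positivity
  have hbinom : 1 / (2 * m : ℝ) ≤ (2 * m).choose m / 4 ^ m := by
    rw [div_le_div_iff₀ hm (by positivity), one_mul, ← Nat.centralBinom_eq_two_mul_choose,
      mul_comm]
    exact_mod_cast Nat.four_pow_le_two_mul_self_mul_centralBinom m hm_pos
  refine ⟨m, lt_of_lt_of_le ?_ (pow_le_pow_left₀ (by positivity) hbinom N)⟩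
  rw [div_pow, one_pow, lt_div_iff₀ (by positivity), mul_comm, mul_pow]
  linarith

section AlmostPeriods

variable {ι : Type*} [Fintype ι]

def almostPeriods (ω : ι → ℝ) (δ : ℝ) : Set ℝ :=
  {τ | ∀ i, ‖exp (↑(ω i * τ) * I) - 1‖ < δ}

lemma isOpen_almostPeriods (ω : ι → ℝ) (δ : ℝ) : IsOpen (almostPeriods ω δ) := by
  simp only [almostPeriods, Set.ofPred_forall]
  exact isOpen_iInter_of_finite fun i => isOpen_lt (by fun_prop) continuous_const

theorem lowerDensity_almostPeriods_pos (ω : ι → ℝ) {δ : ℝ} (hδ : 0 < δ) :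
    0 < lowerDensity (· ∈ almostPeriods ω δ) := by
  set q := max (1 - δ ^ 2 / 4) 0
  have hq₀ : 0 ≤ q := le_max_right _ _
  have hq₁ : q < 1 := max_lt (by nlinarith) one_pos
  obtain ⟨m, hm⟩ := exists_pow_lt_choose_div_four_pow_pow (Fintype.card ι) hq₀ hq₁
  set κ := ((2 * m).choose m / 4 ^ m : ℝ) ^ Fintype.card ι
  obtain ⟨L, hκL, hL⟩ := exists_tendsto_integral_cosPowKernel_div ω m
  refine lt_of_lt_of_le (by linarith : 0 < (κ - q ^ m) / 2) (le_lowerDensity ?_)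
  filter_upwards [hL.eventually (eventually_gt_nhds (by linarith : L - (κ - q ^ m) / 2 < L)),
    eventually_gt_atTop 0] with T hmean hT
  have hint := intervalIntegral_le_measureReal_add_mul (isOpen_almostPeriods ω δ).measurableSet
    (continuous_cosPowKernel ω m).integrableOn_Ioc hT.le (pow_nonneg hq₀ m)
    (fun τ _ => cosPowKernel_le_one ω m τ) fun τ hτ => by
      obtain ⟨i, hi⟩ : ∃ i, δ ≤ ‖exp (↑(ω i * τ) * I) - 1‖ := by
        simpa [almostPeriods] using hτ
      exact cosPowKernel_le_of_le_norm m hi hδ.le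
  rw [lt_div_iff₀ hT] at hmean
  rw [le_div_iff₀ hT]
  linarith [mul_le_mul_of_nonneg_right hκL hT.le]

end AlmostPeriods

lemma exists_norm_tsum_mul_lt {c : ℕ → ℂ} (hc : Summable fun n => ‖c n‖) {ε : ℝ} (hε : 0 < ε) :
    ∃ N : ℕ, ∃ δ > 0, ∀ u : ℕ → ℂ, (∀ n, ‖u n‖ ≤ 2) → (∀ n < N, ‖u n‖ < δ) →
      ‖∑' n, c n * u n‖ < ε := by
  set B := ∑' n, ‖c n‖
  have hB : 0 ≤ B := tsum_nonneg fun n => norm_nonneg _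
  obtain ⟨N, hN⟩ : ∃ N, ∑' n, ‖c (n + N)‖ < ε / 4 :=
    ((tendsto_sum_nat_add fun n => ‖c n‖).eventually (eventually_lt_nhds (by positivity))).exists
  refine ⟨N, ε / (2 * (B + 1)), by positivity, fun u hu₂ huδ => ?_⟩
  have hcu (n : ℕ) : ‖c n * u n‖ ≤ 2 * ‖c n‖ := by
    rw [norm_mul, mul_comm]; gcongr; exact hu₂ n
  have hsum : Summable fun n => ‖c n * u n‖ :=
    (hc.mul_left 2).of_nonneg_of_le (fun _ => norm_nonneg _) hcu
  have hhead : ∑ n ∈ range N, ‖c n * u n‖ ≤ ε / (2 * (B + 1)) * B := by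
    calc ∑ n ∈ range N, ‖c n * u n‖ ≤ ∑ n ∈ range N, ε / (2 * (B + 1)) * ‖c n‖ :=
          sum_le_sum fun n hn => by
            rw [norm_mul, mul_comm]; gcongr; exact (huδ n (mem_range.mp hn)).le
      _ ≤ ε / (2 * (B + 1)) * B := by
          rw [← mul_sum]; gcongr; exact hc.sum_le_tsum _ fun n _ => norm_nonneg _
  have htail : ∑' n, ‖c (n + N) * u (n + N)‖ ≤ 2 * (ε / 4) :=
    calc ∑' n, ‖c (n + N) * u (n + N)‖ ≤ ∑' n, 2 * ‖c (n + N)‖ :=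
          ((summable_nat_add_iff N).mpr hsum).tsum_le_tsum (fun n => hcu (n + N))
            (((summable_nat_add_iff N).mpr hc).mul_left 2)
      _ ≤ 2 * (ε / 4) := by rw [tsum_mul_left]; gcongr
  calc ‖∑' n, c n * u n‖ ≤ ∑' n, ‖c n * u n‖ := norm_tsum_le_tsum_norm hsum
    _ = ∑ n ∈ range N, ‖c n * u n‖ + ∑' n, ‖c (n + N) * u (n + N)‖ :=
        (hsum.sum_add_tsum_nat_add N).symm
    _ ≤ ε / (2 * (B + 1)) * B + 2 * (ε / 4) := add_le_add hhead htail
    _ < ε := by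
        have : ε / (2 * (B + 1)) * B < ε / 2 := by
          rw [div_mul_eq_mul_div, div_lt_iff₀ (by positivity)]; nlinarith
        linarith

lemma norm_mul_exp_neg_mul (a : ℂ) (l : ℝ) (s : ℂ) :
    ‖a * exp (-(l : ℂ) * s)‖ = ‖a‖ * Real.exp (-l * s.re) := by
  simp [norm_exp]

lemma exp_neg_mul_add_mul_I (l τ : ℝ) (s : ℂ) :
    exp (-(l : ℂ) * (s + τ * I)) = exp (-(l : ℂ) * s) * exp (↑(-l * τ) * I) := by
  rw [← exp_add]; push_cast; ring_nf

lemma tsum_mul_exp_sub_tsum {c : ℕ → ℂ} (hc : Summable fun n => ‖c n‖) (θ : ℕ → ℝ) :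
    ∑' n, c n * exp (↑(θ n) * I) - ∑' n, c n = ∑' n, c n * (exp (↑(θ n) * I) - 1) := by
  have hshift : Summable fun n => c n * exp (↑(θ n) * I) :=
    .of_norm (by simpa [norm_exp_ofReal_mul_I] using hc)
  simp_rw [mul_sub_one]
  exact (hshift.tsum_sub hc.of_norm).symm

/-- Bohr's almost periodicity theorem for general Dirichlet series: if
`f(s) = ∑_n a_n e^{−λ_n s}` converges absolutely at `s₀`, then for every `ε > 0` the set of
`τ ∈ [0, T]` with `|f(s₀ + iτ) − f(s₀)| < ε` has positive lower density. -/
theorem bohr_almost_periodicity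
    (a : ℕ → ℂ) (lam : ℕ → ℝ) (s₀ : ℂ)
    (habs : Summable (fun n => ‖a n‖ * Real.exp (-(lam n) * s₀.re))) :
    ∀ ε : ℝ, 0 < ε →
      0 < lowerDensity (fun τ =>
        ‖
          ((∑' n, a n * Complex.exp (-(lam n : ℂ) * (s₀ + τ * Complex.I))) -
            ∑' n, a n * Complex.exp (-(lam n : ℂ) * s₀))‖ < ε) := by
  intro ε hε
  set c : ℕ → ℂ := fun n => a n * exp (-(lam n : ℂ) * s₀)
  have hc : Summable fun n => ‖c n‖ := by simpa only [c, norm_mul_exp_neg_mul] using habs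
  obtain ⟨N, δ, hδ, hsmall⟩ := exists_norm_tsum_mul_lt hc hε
  refine (lowerDensity_almostPeriods_pos (fun i : Fin N => -lam i) hδ).trans_le
    (lowerDensity_mono fun τ hτ => ?_)
  simp_rw [exp_neg_mul_add_mul_I, ← mul_assoc]
  rw [tsum_mul_exp_sub_tsum hc]
  exact hsmall _ (fun n => norm_exp_ofReal_mul_I_sub_one_le_two _) fun n hn => hτ ⟨n, hn⟩
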